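/- Let H be a 3-uniform hypergraph on n vertices with minimum codegree at least ⌊n/3⌋. Then H has a spanning tight component: a tight component whose edges together cover all n vertices. -/

import Mathlib

/-!
Write `N(u, v)` (`coNbr E u v`) for the codegree neighbourhood of a pair and `δ = ⌊n/3⌋`,
so that `n ≤ 3δ + 2`.

If three vertices `a, b, c` are not covered by a single tight component, then `N(a, b)`,
`N(a, c)`, `N(b, c)` and `{a, b, c}` are pairwise disjoint, since a common element would
produce two edges sharing a pair. Hence `3δ + 3 ≤ n`, which is impossible: every triple of
vertices is covered by one tight component.

Through a vertex `x` pass at most two tight components: the links of `x` in distinct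
components are disjoint (the pair `{x, w}` determines the component), and a component
containing an edge `{x, a, _}` has a link containing `{a} ∪ N(x, a)`, of size `≥ δ + 1`.
Three components would give `3(δ + 1) + 1 ≤ n`.

Now if no component is spanning, take an edge `C ∋ x`, a vertex `y` missed by the
component of `C`, an edge `D ⊇ {x, y}` and a vertex `y'` missed by the component of `D`.
The component covering `x, y, y'` contains an edge through `x` and is different from the
components of both `C` and `D`, which are themselves different: three components through `x`.
-/

open Finset

/-- Two edges are in the same tight component of the `3`-uniform hypergraph with edge
set `E` iff they are related by the reflexive-transitive closure of the relation
"both are edges and they share exactly 2 vertices". -/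
def TightRel {V : Type*} [DecidableEq V] (E : Finset (Finset V)) :
    Finset V → Finset V → Prop :=
  Relation.ReflTransGen (fun e f => e ∈ E ∧ f ∈ E ∧ (e ∩ f).card = 2)

section TightComponent

variable {V : Type*} [DecidableEq V] {E : Finset (Finset V)}

def TightCovers (E : Finset (Finset V)) (e : Finset V) (v : V) : Prop :=
  ∃ f ∈ E, TightRel E e f ∧ v ∈ f

theorem TightRel.trans {e f g : Finset V} (hef : TightRel E e f) (hfg : TightRel E f g) :
    TightRel E e g :=
  Relation.ReflTransGen.trans hef hfg

theorem TightRel.symm {e f : Finset V} (h : TightRel E e f) : TightRel E f e := by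
  induction h with
  | refl => exact Relation.ReflTransGen.refl
  | tail _ hgh ih =>
    have hhg : TightRel E _ _ :=
      Relation.ReflTransGen.single ⟨hgh.2.1, hgh.1, by rw [inter_comm]; exact hgh.2.2⟩
    exact hhg.trans ih

theorem TightRel.tightCovers {e f : Finset V} {v : V} (h : TightRel E e f)
    (hv : TightCovers E f v) : TightCovers E e v :=
  let ⟨g, hg, hfg, hvg⟩ := hv
  ⟨g, hg, h.trans hfg, hvg⟩

theorem tightCovers_self {e : Finset V} {v : V} (he : e ∈ E) (hv : v ∈ e) :
    TightCovers E e v :=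
  ⟨e, he, Relation.ReflTransGen.refl, hv⟩

theorem tightRel_of_mem_of_mem (hunif : ∀ e ∈ E, e.card = 3) {a b : V} (hab : a ≠ b)
    {g h : Finset V} (hg : g ∈ E) (hh : h ∈ E) (hag : a ∈ g) (hbg : b ∈ g) (hah : a ∈ h)
    (hbh : b ∈ h) : TightRel E g h := by
  rcases eq_or_ne g h with rfl | hne
  · exact Relation.ReflTransGen.refl
  refine Relation.ReflTransGen.single ⟨hg, hh, le_antisymm ?_ ?_⟩
  · have hssub : g ∩ h ⊂ g := by
      refine Finset.ssubset_iff_subset_ne.2 ⟨inter_subset_left, fun hgh => hne ?_⟩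
      exact eq_of_subset_of_card_le (hgh ▸ inter_subset_right)
        (by rw [hunif g hg, hunif h hh])
    have := card_lt_card hssub
    rw [hunif g hg] at this
    omega
  · calc 2 = #{a, b} := (card_pair hab).symm
      _ ≤ #(g ∩ h) := card_le_card (by simp [insert_subset_iff, *])

end TightComponent

section Codegree

variable {V : Type*} [Fintype V] [DecidableEq V] {E : Finset (Finset V)}

def coNbr (E : Finset (Finset V)) (u v : V) : Finset V :=
  univ.filter fun w => ({u, v, w} : Finset V) ∈ E

theorem mem_coNbr {u v w : V} : w ∈ coNbr E u v ↔ ({u, v, w} : Finset V) ∈ E := by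
  simp [coNbr]

theorem coNbr_comm (u v : V) : coNbr E u v = coNbr E v u := by
  ext w
  simp only [mem_coNbr, insert_comm]

theorem left_notMem_coNbr (hunif : ∀ e ∈ E, e.card = 3) (u v : V) : u ∉ coNbr E u v := by
  intro h
  have h3 := hunif _ (mem_coNbr.1 h)
  rw [insert_eq_of_mem (by simp)] at h3
  have : #({v, u} : Finset V) ≤ 2 := card_le_two
  omega

theorem right_notMem_coNbr (hunif : ∀ e ∈ E, e.card = 3) (u v : V) : v ∉ coNbr E u v := by
  intro h
  have h3 := hunif _ (mem_coNbr.1 h)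
  rw [pair_eq_singleton] at h3
  have : #({u, v} : Finset V) ≤ 2 := card_le_two
  omega

theorem card_add_card_add_card_add_card_le {A B C D : Finset V} (hAB : Disjoint A B)
    (hAC : Disjoint A C) (hAD : Disjoint A D) (hBC : Disjoint B C) (hBD : Disjoint B D)
    (hCD : Disjoint C D) : #A + #B + #C + #D ≤ Fintype.card V := by
  rw [← card_union_of_disjoint hAB, ← card_union_of_disjoint (disjoint_union_left.2 ⟨hAC, hBC⟩),
    ← card_union_of_disjoint (disjoint_union_left.2 ⟨disjoint_union_left.2 ⟨hAD, hBD⟩, hCD⟩)]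
  exact card_le_univ _

theorem exists_tightCovers_of_mem_coNbr_of_mem_coNbr (hunif : ∀ e ∈ E, e.card = 3)
    {a b c w : V} (hb : w ∈ coNbr E a b) (hc : w ∈ coNbr E a c) :
    ∃ e ∈ E, TightCovers E e a ∧ TightCovers E e b ∧ TightCovers E e c := by
  have haw : a ≠ w := by rintro rfl; exact left_notMem_coNbr hunif a b hb
  rw [mem_coNbr] at hb hc
  have hbc : TightRel E {a, b, w} {a, c, w} :=
    tightRel_of_mem_of_mem hunif haw hb hc (by simp) (by simp) (by simp) (by simp)
  exact ⟨_, hb, tightCovers_self hb (by simp), tightCovers_self hb (by simp),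
    hbc.tightCovers (tightCovers_self hc (by simp))⟩

theorem card_coNbr_add_card_coNbr_add_card_coNbr_add_three_le (hunif : ∀ e ∈ E, e.card = 3)
    {a b c : V} (hab : a ≠ b) (hac : a ≠ c) (hbc : b ≠ c)
    (hcov : ¬ ∃ e ∈ E, TightCovers E e a ∧ TightCovers E e b ∧ TightCovers E e c) :
    #(coNbr E a b) + #(coNbr E a c) + #(coNbr E b c) + 3 ≤ Fintype.card V := by
  have hno_edge : ∀ e ∈ E, a ∈ e → b ∈ e → c ∈ e → False := fun e he ha hb hc =>
    hcov ⟨e, he, tightCovers_self he ha, tightCovers_self he hb, tightCovers_self he hc⟩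
  have hab_ac : Disjoint (coNbr E a b) (coNbr E a c) := disjoint_left.2 fun _ h₁ h₂ =>
    hcov (exists_tightCovers_of_mem_coNbr_of_mem_coNbr hunif h₁ h₂)
  have hab_bc : Disjoint (coNbr E a b) (coNbr E b c) := disjoint_left.2 fun _ h₁ h₂ => by
    rw [coNbr_comm] at h₁
    obtain ⟨e, he, hb, ha, hc⟩ := exists_tightCovers_of_mem_coNbr_of_mem_coNbr hunif h₁ h₂
    exact hcov ⟨e, he, ha, hb, hc⟩
  have hac_bc : Disjoint (coNbr E a c) (coNbr E b c) := disjoint_left.2 fun _ h₁ h₂ => by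
    rw [coNbr_comm] at h₁ h₂
    obtain ⟨e, he, hc, ha, hb⟩ := exists_tightCovers_of_mem_coNbr_of_mem_coNbr hunif h₁ h₂
    exact hcov ⟨e, he, ha, hb, hc⟩
  have hT : ∀ {p q r : V}, ({p, q, r} : Finset V) = {a, b, c} →
      Disjoint (coNbr E p q) {a, b, c} := by
    intro p q r hpqr
    rw [← hpqr]
    refine disjoint_right.2 fun w hw hN => ?_
    rcases mem_insert.1 hw with rfl | hw
    · exact left_notMem_coNbr hunif _ _ hN
    rcases mem_insert.1 hw with rfl | hw
    · exact right_notMem_coNbr hunif _ _ hN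
    rw [mem_singleton.1 hw, mem_coNbr, hpqr] at hN
    exact hno_edge _ hN (by simp) (by simp) (by simp)
  have := card_add_card_add_card_add_card_le hab_ac hab_bc (hT rfl) hac_bc
    (hT (by rw [pair_comm])) (hT (by ext; simp only [mem_insert, mem_singleton]; tauto))
  rwa [card_eq_three.2 ⟨a, b, c, hab, hac, hbc, rfl⟩] at this

theorem exists_tightCovers_triple (hunif : ∀ e ∈ E, e.card = 3) {δ : ℕ}
    (hcod : ∀ u v : V, u ≠ v → δ ≤ #(coNbr E u v)) (hδ : Fintype.card V < 3 * δ + 3)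
    {a b c : V} (hab : a ≠ b) (hac : a ≠ c) (hbc : b ≠ c) :
    ∃ e ∈ E, TightCovers E e a ∧ TightCovers E e b ∧ TightCovers E e c := by
  by_contra hcov
  have := card_coNbr_add_card_coNbr_add_card_coNbr_add_three_le hunif hab hac hbc hcov
  have := hcod a b hab
  have := hcod a c hac
  have := hcod b c hbc
  omega

end Codegree

section Link

variable {V : Type*} [Fintype V] [DecidableEq V] {E : Finset (Finset V)}

open Classical in
noncomputable def tightLink (E : Finset (Finset V)) (e : Finset V) (x : V) : Finset V :=
  univ.filter fun w => w ≠ x ∧ ∃ g ∈ E, TightRel E e g ∧ x ∈ g ∧ w ∈ g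

theorem mem_tightLink {e : Finset V} {x w : V} :
    w ∈ tightLink E e x ↔ w ≠ x ∧ ∃ g ∈ E, TightRel E e g ∧ x ∈ g ∧ w ∈ g := by
  simp [tightLink]

theorem self_notMem_tightLink (e : Finset V) (x : V) : x ∉ tightLink E e x :=
  fun h => (mem_tightLink.1 h).1 rfl

theorem disjoint_tightLink (hunif : ∀ e ∈ E, e.card = 3) {e f : Finset V} (x : V)
    (h : ¬ TightRel E e f) : Disjoint (tightLink E e x) (tightLink E f x) := by
  refine disjoint_left.2 fun w hwe hwf => h ?_
  obtain ⟨hwx, g, hg, heg, hxg, hwg⟩ := mem_tightLink.1 hwe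
  obtain ⟨-, g', hg', hfg', hxg', hwg'⟩ := mem_tightLink.1 hwf
  exact (heg.trans (tightRel_of_mem_of_mem hunif hwx hg hg' hwg hxg hwg' hxg')).trans hfg'.symm

theorem lt_card_tightLink (hunif : ∀ e ∈ E, e.card = 3) {δ : ℕ}
    (hcod : ∀ u v : V, u ≠ v → δ ≤ #(coNbr E u v)) {e : Finset V} {x : V} (he : e ∈ E)
    (hxe : x ∈ e) : δ < #(tightLink E e x) := by
  obtain ⟨a, hae, hax⟩ := exists_mem_ne (by rw [hunif e he]; norm_num) x
  refine (hcod x a hax.symm).trans_lt <|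
    (card_lt_card (ssubset_insert (right_notMem_coNbr hunif x a))).trans_le (card_le_card ?_)
  intro w hw
  rw [mem_tightLink]
  rcases mem_insert.1 hw with rfl | hw
  · exact ⟨hax, e, he, Relation.ReflTransGen.refl, hxe, hae⟩
  · have hwx : w ≠ x := by rintro rfl; exact left_notMem_coNbr hunif w a hw
    have hg := mem_coNbr.1 hw
    exact ⟨hwx, _, hg, tightRel_of_mem_of_mem hunif hax.symm he hg hxe hae (by simp) (by simp),
      by simp, by simp⟩

theorem tightRel_of_three_edges_through (hunif : ∀ e ∈ E, e.card = 3) {δ : ℕ}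
    (hcod : ∀ u v : V, u ≠ v → δ ≤ #(coNbr E u v)) (hδ : Fintype.card V < 3 * δ + 4)
    {x : V} {e₁ e₂ e₃ : Finset V} (h₁ : e₁ ∈ E) (h₂ : e₂ ∈ E) (h₃ : e₃ ∈ E) (hx₁ : x ∈ e₁)
    (hx₂ : x ∈ e₂) (hx₃ : x ∈ e₃) (h₁₂ : ¬ TightRel E e₁ e₂) (h₁₃ : ¬ TightRel E e₁ e₃) :
    TightRel E e₂ e₃ := by
  by_contra h₂₃
  have hx : ∀ e : Finset V, Disjoint (tightLink E e x) {x} := fun e =>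
    disjoint_singleton_right.2 (self_notMem_tightLink e x)
  have hsum := card_add_card_add_card_add_card_le (disjoint_tightLink hunif x h₁₂)
    (disjoint_tightLink hunif x h₁₃) (hx e₁) (disjoint_tightLink hunif x h₂₃) (hx e₂) (hx e₃)
  rw [card_singleton] at hsum
  have := lt_card_tightLink hunif hcod h₁ hx₁
  have := lt_card_tightLink hunif hcod h₂ hx₂
  have := lt_card_tightLink hunif hcod h₃ hx₃
  omega

end Link

/-- A 3-uniform hypergraph on `n ≥ 3` vertices with minimum codegree at least `⌊n/3⌋`
has a spanning tight component. -/
theorem stmt3 {V : Type*} [Fintype V] [DecidableEq V] (E : Finset (Finset V))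
    (hn : 3 ≤ Fintype.card V)
    (hunif : ∀ e ∈ E, e.card = 3)
    (hcod : ∀ u v : V, u ≠ v →
      Fintype.card V / 3 ≤
        (Finset.univ.filter (fun w => ({u, v, w} : Finset V) ∈ E)).card) :
    ∃ e₀ ∈ E, ∀ v : V, ∃ e ∈ E, TightRel E e₀ e ∧ v ∈ e := by
  have hcod' : ∀ u v : V, u ≠ v → Fintype.card V / 3 ≤ #(coNbr E u v) := hcod
  have hedge : ∀ u v : V, u ≠ v → ∃ w, ({u, v, w} : Finset V) ∈ E := fun u v huv =>
    have hpos : 0 < #(coNbr E u v) := by have := hcod' u v huv; omega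
    (card_pos.1 hpos).imp fun _ => mem_coNbr.1
  suffices ∃ e₀ ∈ E, ∀ v, TightCovers E e₀ v from this
  by_contra! hspan
  obtain ⟨x, z, hxz⟩ := Fintype.exists_pair_of_one_lt_card (by omega : 1 < Fintype.card V)
  obtain ⟨c, hC⟩ := hedge x z hxz
  obtain ⟨y, hy⟩ := hspan _ hC
  have hyx : y ≠ x := by rintro rfl; exact hy (tightCovers_self hC (by simp))
  obtain ⟨d, hD⟩ := hedge x y hyx.symm
  obtain ⟨y', hy'⟩ := hspan _ hD
  have hy'x : y' ≠ x := by rintro rfl; exact hy' (tightCovers_self hD (by simp))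
  have hy'y : y' ≠ y := by rintro rfl; exact hy' (tightCovers_self hD (by simp))
  obtain ⟨e, -, ⟨g, hg, heg, hxg⟩, hey, hey'⟩ :=
    exists_tightCovers_triple hunif hcod' (by omega) hyx.symm hy'x.symm hy'y.symm
  have hCD : ¬ TightRel E {x, z, c} {x, y, d} := fun h =>
    hy (h.tightCovers (tightCovers_self hD (by simp)))
  have hCg : ¬ TightRel E {x, z, c} g := fun h => hy ((h.trans heg.symm).tightCovers hey)
  have hDg : ¬ TightRel E {x, y, d} g := fun h => hy' ((h.trans heg.symm).tightCovers hey')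
  exact hDg (tightRel_of_three_edges_through hunif hcod' (by omega) hC hD hg (by simp) (by simp)
    hxg hCD hCg)
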